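/- Let n ≥ 1, let X be a topological space, and let φ, ψ : S^{n−1} → X be topological embeddings with the same image, φ(S^{n−1}) = ψ(S^{n−1}). Then the adjunction spaces X ∪_φ Dⁿ and X ∪_ψ Dⁿ are homeomorphic, via a homeomorphism that restricts to the identity on X. -/

import Mathlib

/-!
Because `φ` and `ψ` are embeddings with the same image, `e = ψ⁻¹ ∘ φ` is a self-homeomorphism
of `S^{n-1}` with `ψ ∘ e = φ`. Its cone `x ↦ ‖x‖ • e (x / ‖x‖)` is a homeomorphism of `Dⁿ`
extending `e`; together with the identity of `X` it respects the identifications `s ~ φ s`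
and `e s ~ ψ (e s)`, so it descends to the required homeomorphism of adjunction spaces.
-/

open Metric Set Topology

/-- The identifications defining the adjunction space `X ∪_φ Dⁿ`:  a point `s` of the
boundary sphere `S^{n-1} ⊆ Dⁿ` is identified with `φ s ∈ X`. -/
def adjunctionRel {n : ℕ} {X : Type*}
    (φ : sphere (0 : EuclideanSpace ℝ (Fin n)) 1 → X) :
    X ⊕ closedBall (0 : EuclideanSpace ℝ (Fin n)) 1 →
      X ⊕ closedBall (0 : EuclideanSpace ℝ (Fin n)) 1 → Prop :=
  fun p q => ∃ s : sphere (0 : EuclideanSpace ℝ (Fin n)) 1,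
    p = Sum.inr ⟨(s : EuclideanSpace ℝ (Fin n)), sphere_subset_closedBall s.2⟩ ∧
    q = Sum.inl (φ s)

/-- The adjunction space `X ∪_φ Dⁿ`, i.e. the quotient of `X ⊔ Dⁿ` by the
identifications `s ~ φ s` for `s ∈ S^{n-1}`, with the quotient topology. -/
def AdjunctionSpace {n : ℕ} {X : Type*} [TopologicalSpace X]
    (φ : sphere (0 : EuclideanSpace ℝ (Fin n)) 1 → X) : Type _ :=
  Quot (adjunctionRel φ)

noncomputable instance {n : ℕ} {X : Type*} [TopologicalSpace X]
    (φ : sphere (0 : EuclideanSpace ℝ (Fin n)) 1 → X) :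
    TopologicalSpace (AdjunctionSpace φ) :=
  instTopologicalSpaceQuot

section Radial

variable {E : Type*} [NormedAddCommGroup E] [NormedSpace ℝ E]

open Classical in
noncomputable def radialExtension (e : sphere (0 : E) 1 → sphere (0 : E) 1) (x : E) : E :=
  if hx : x = 0 then 0
  else (homeomorphUnitSphereProd E).symm
    (Prod.map e id (homeomorphUnitSphereProd E ⟨x, mem_compl_singleton_iff.2 hx⟩))

variable (e e' : sphere (0 : E) 1 → sphere (0 : E) 1)

@[simp]
theorem radialExtension_zero : radialExtension e 0 = 0 := dif_pos rfl

theorem radialExtension_of_ne_zero {x : E} (hx : x ≠ 0) :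
    radialExtension e x = (homeomorphUnitSphereProd E).symm
      (Prod.map e id (homeomorphUnitSphereProd E ⟨x, mem_compl_singleton_iff.2 hx⟩)) :=
  dif_neg hx

@[simp]
theorem norm_radialExtension (x : E) : ‖radialExtension e x‖ = ‖x‖ := by
  rcases eq_or_ne x 0 with rfl | hx
  · simp
  · simp [radialExtension_of_ne_zero e hx, norm_smul]

theorem radialExtension_radialExtension (x : E) :
    radialExtension e' (radialExtension e x) = radialExtension (e' ∘ e) x := by
  rcases eq_or_ne x 0 with rfl | hx
  · simp
  · have hy : radialExtension e x ≠ 0 := by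
      rwa [← norm_ne_zero_iff, norm_radialExtension, norm_ne_zero_iff]
    have hpolar : (⟨radialExtension e x, mem_compl_singleton_iff.2 hy⟩ : ({0}ᶜ : Set E)) =
        (homeomorphUnitSphereProd E).symm
          (Prod.map e id (homeomorphUnitSphereProd E ⟨x, mem_compl_singleton_iff.2 hx⟩)) :=
      Subtype.ext (radialExtension_of_ne_zero e hx)
    rw [radialExtension_of_ne_zero e' hy, hpolar, Homeomorph.apply_symm_apply, Prod.map_map,
      Function.id_comp, radialExtension_of_ne_zero (e' ∘ e) hx]

theorem radialExtension_id (x : E) : radialExtension id x = x := by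
  rcases eq_or_ne x 0 with rfl | hx
  · simp
  · rw [radialExtension_of_ne_zero _ hx, Prod.map_id, id, Homeomorph.symm_apply_apply]

theorem radialExtension_coe_sphere (s : sphere (0 : E) 1) :
    radialExtension e s = e s := by
  have hs : ‖(s : E)‖ = 1 := mem_sphere_zero_iff_norm.mp s.2
  have hs0 : (s : E) ≠ 0 := ne_zero_of_mem_sphere one_ne_zero s
  have hdir : (homeomorphUnitSphereProd E ⟨s, mem_compl_singleton_iff.2 hs0⟩).1 = s :=
    Subtype.ext (by simp [hs])
  simp [radialExtension_of_ne_zero e hs0, hdir, hs]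

theorem continuous_radialExtension (he : Continuous e) : Continuous (radialExtension e) := by
  refine continuous_iff_continuousAt.2 fun x => ?_
  rcases eq_or_ne x 0 with rfl | hx
  · simpa [ContinuousAt, tendsto_zero_iff_norm_tendsto_zero] using
      continuous_norm.tendsto (0 : E)
  · refine ContinuousOn.continuousAt ?_ (isOpen_compl_singleton.mem_nhds hx)
    have : ({0}ᶜ : Set E).domRestrict (radialExtension e) = fun y =>
        ((homeomorphUnitSphereProd E).symm (Prod.map e id (homeomorphUnitSphereProd E y)) : E) :=
      funext fun y => radialExtension_of_ne_zero e y.2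
    rw [continuousOn_iff_continuous_domRestrict, this]
    exact continuous_subtype_val.comp <| (homeomorphUnitSphereProd E).symm.continuous.comp <|
      (he.prodMap continuous_id).comp (homeomorphUnitSphereProd E).continuous

variable (e : sphere (0 : E) 1 ≃ₜ sphere (0 : E) 1)

namespace Homeomorph

noncomputable def radialExtension : E ≃ₜ E where
  toFun := _root_.radialExtension e
  invFun := _root_.radialExtension e.symm
  left_inv x := by rw [radialExtension_radialExtension, e.symm_comp_self, radialExtension_id]
  right_inv x := by rw [radialExtension_radialExtension, e.self_comp_symm, radialExtension_id]
  continuous_toFun := continuous_radialExtension e e.continuous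
  continuous_invFun := continuous_radialExtension e.symm e.symm.continuous

noncomputable def radialExtensionClosedBall : closedBall (0 : E) 1 ≃ₜ closedBall (0 : E) 1 :=
  e.radialExtension.subtype fun x => by
    simp [Homeomorph.radialExtension]

theorem radialExtensionClosedBall_symm :
    e.radialExtensionClosedBall.symm = e.symm.radialExtensionClosedBall :=
  rfl

theorem radialExtensionClosedBall_inclusion (s : sphere (0 : E) 1) :
    e.radialExtensionClosedBall (inclusion sphere_subset_closedBall s) =
      inclusion sphere_subset_closedBall (e s) :=
  Subtype.ext (radialExtension_coe_sphere e s)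

end Homeomorph

end Radial

namespace Topology.IsEmbedding

variable {A B X : Type*} [TopologicalSpace A] [TopologicalSpace B] [TopologicalSpace X]
  {f : A → X} {g : B → X}

noncomputable def homeomorphOfRangeEq (hf : IsEmbedding f) (hg : IsEmbedding g)
    (h : range f = range g) : A ≃ₜ B :=
  hf.toHomeomorph.trans ((Homeomorph.setCongr h).trans hg.toHomeomorph.symm)

theorem apply_homeomorphOfRangeEq (hf : IsEmbedding f) (hg : IsEmbedding g)
    (h : range f = range g) (a : A) : g (hf.homeomorphOfRangeEq hg h a) = f a :=
  congrArg Subtype.val (hg.toHomeomorph.apply_symm_apply _)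

end Topology.IsEmbedding

namespace AdjunctionSpace

local notation "𝕊" n:max => sphere (0 : EuclideanSpace ℝ (Fin n)) 1
local notation "𝔻" n:max => closedBall (0 : EuclideanSpace ℝ (Fin n)) 1

variable {n : ℕ} {X : Type*}

def Compatible (φ ψ : 𝕊 n → X) (F : 𝔻 n → 𝔻 n) : Prop :=
  ∀ s, ∃ t, F (inclusion sphere_subset_closedBall s) = inclusion sphere_subset_closedBall t ∧
    ψ t = φ s

variable {φ ψ : 𝕊 n → X}

theorem compatible_radialExtensionClosedBall (e : 𝕊 n ≃ₜ 𝕊 n) (he : ∀ s, ψ (e s) = φ s) :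
    Compatible φ ψ e.radialExtensionClosedBall :=
  fun s => ⟨e s, e.radialExtensionClosedBall_inclusion s, he s⟩

variable [TopologicalSpace X] {F G : 𝔻 n → 𝔻 n}

def map (F : 𝔻 n → 𝔻 n) (hF : Compatible φ ψ F) : AdjunctionSpace φ → AdjunctionSpace ψ :=
  Quot.lift (Sum.elim (fun x => Quot.mk _ (.inl x)) fun d => Quot.mk _ (.inr (F d))) <| by
    rintro _ _ ⟨s, rfl, rfl⟩
    obtain ⟨t, hFs, ht⟩ := hF s
    exact (congrArg (Quot.mk _ ∘ Sum.inr) hFs).trans (Quot.sound ⟨t, rfl, by rw [ht]⟩)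

theorem continuous_map (hF : Compatible φ ψ F) (hFc : Continuous F) : Continuous (map F hF) :=
  continuous_quot_lift _ <| (continuous_quot_mk.comp continuous_inl).sumElim
    (continuous_quot_mk.comp (continuous_inr.comp hFc))

theorem map_leftInverse (hF : Compatible φ ψ F) (hG : Compatible ψ φ G)
    (h : Function.LeftInverse G F) : Function.LeftInverse (map G hG) (map F hF) := by
  rintro ⟨x | d⟩
  · rfl
  · exact congrArg (Quot.mk _ ∘ Sum.inr) (h d)

def homeomorph (F : 𝔻 n ≃ₜ 𝔻 n) (hF : Compatible φ ψ F) (hF' : Compatible ψ φ F.symm) :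
    AdjunctionSpace φ ≃ₜ AdjunctionSpace ψ where
  toFun := map F hF
  invFun := map F.symm hF'
  left_inv := map_leftInverse hF hF' F.left_inv
  right_inv := map_leftInverse hF' hF F.right_inv
  continuous_toFun := continuous_map hF F.continuous
  continuous_invFun := continuous_map hF' F.symm.continuous

end AdjunctionSpace

theorem adjunction_space_independent_of_attaching_map_general
    {n : ℕ} {X : Type*} [TopologicalSpace X]
    (φ ψ : sphere (0 : EuclideanSpace ℝ (Fin n)) 1 → X)
    (hφ : IsEmbedding φ) (hψ : IsEmbedding ψ)
    (himg : range φ = range ψ) :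
    ∃ H : AdjunctionSpace φ ≃ₜ AdjunctionSpace ψ,
      ∀ x : X, H (Quot.mk _ (Sum.inl x)) = Quot.mk _ (Sum.inl x) := by
  set e := hφ.homeomorphOfRangeEq hψ himg
  have he : ∀ s, ψ (e s) = φ s := hφ.apply_homeomorphOfRangeEq hψ himg
  have he' : ∀ s, φ (e.symm s) = ψ s := fun s => by rw [← he, e.apply_symm_apply]
  refine ⟨AdjunctionSpace.homeomorph e.radialExtensionClosedBall
    (AdjunctionSpace.compatible_radialExtensionClosedBall e he) ?_, fun x => rfl⟩
  rw [Homeomorph.radialExtensionClosedBall_symm]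
  exact AdjunctionSpace.compatible_radialExtensionClosedBall e.symm he'

theorem adjunction_space_independent_of_attaching_map
    {n : ℕ} (hn : 1 ≤ n) {X : Type*} [TopologicalSpace X]
    (φ ψ : sphere (0 : EuclideanSpace ℝ (Fin n)) 1 → X)
    (hφ : IsEmbedding φ) (hψ : IsEmbedding ψ)
    (himg : range φ = range ψ) :
    ∃ H : AdjunctionSpace φ ≃ₜ AdjunctionSpace ψ,
      ∀ x : X, H (Quot.mk _ (Sum.inl x)) = Quot.mk _ (Sum.inl x) :=
  adjunction_space_independent_of_attaching_map_general φ ψ hφ hψ himg
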